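/- Let s > 0 with s ≠ t and define B_s(x) := (x+t)/(x+s) − log((x+t)/(x+s)) − 1 for x > 0. Then B_s is completely monotone: for all m ∈ ℕ₀ and all x > 0 it holds (−1)^m B_s^{(m)}(x) > 0; in particular B_s > 0, B_s' < 0 and B_s'' > 0 on (0,∞). Moreover B_s(0) = t/s − log(t/s) − 1 > 0 and B_s(x) → 0 as x → ∞; consequently F_s(x) → −∞ as x → 0⁺ and F_s(x) → 0 as x → ∞. -/

import Mathlib

/-!
With `u = x + s` and `v = x + t` one has `B_s(x) = log u - log v + (v - u) log'(u)`, hence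
`(-1)^n B_s^{(n)}(x) = h(v) - h(u) - h'(u) (v - u)` for `h = (-1)^(n+1) log^{(n)}`. As
`h'' = (n+1)! y^(-n-2) > 0`, `h` is strictly convex on `(0, ∞)`, so this gap between `h` and its
tangent line at `u` is positive when `u ≠ v`.

The limits of `F_s` come from `log x - 1/x ≤ ψ(x) ≤ log x`: the derivatives of the convex function
`log Γ` at `x` and `x + 1` bracket its slope `log x` across `[x, x + 1]`, and `ψ(x+1) = ψ(x) + 1/x`.
-/

open Real Filter Topology

/-- The digamma function `ψ(x) = d/dx log Γ(x)`. -/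
noncomputable def digamma (x : ℝ) : ℝ := deriv (fun y => Real.log (Real.Gamma y)) x

/-- `φ(x) := ψ(x) - log x`. -/
noncomputable def phiFn (x : ℝ) : ℝ := digamma x - Real.log x

/-- `B_s(x) := (x+t)/(x+s) − log((x+t)/(x+s)) − 1`. -/
noncomputable def Bs (t s x : ℝ) : ℝ :=
  (x + t) / (x + s) - Real.log ((x + t) / (x + s)) - 1

/-- `F_s(x) := φ(x) − φ(x+t) + (x+t)/(x+s) − log((x+t)/(x+s)) − 1`. -/
noncomputable def Fs (t s x : ℝ) : ℝ :=
  phiFn x - phiFn (x + t) + (x + t) / (x + s) - Real.log ((x + t) / (x + s)) - 1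

open scoped Nat in
theorem Real.iteratedDeriv_succ_log (k : ℕ) (y : ℝ) :
    iteratedDeriv (k + 1) log y = (-1) ^ k * k ! * y ^ (-1 - k : ℤ) := by
  rw [iteratedDeriv_succ', deriv_log', iteratedDeriv_eq_iterate, iter_deriv_inv]

theorem StrictConvexOn.add_deriv_mul_sub_lt {S : Set ℝ} {f : ℝ → ℝ} (hf : StrictConvexOn ℝ S f)
    {x y : ℝ} (hx : x ∈ S) (hy : y ∈ S) (hxy : x ≠ y) (hfx : DifferentiableAt ℝ f x) :
    f x + deriv f x * (y - x) < f y := by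
  rcases hxy.lt_or_gt with hlt | hgt
  · have := hf.deriv_lt_slope hx hy hlt hfx
    rw [slope_def_field, lt_div_iff₀ (sub_pos.2 hlt)] at this
    linarith
  · have := hf.slope_lt_deriv hy hx hgt hfx
    rw [slope_def_field, div_lt_iff₀ (sub_pos.2 hgt)] at this
    linarith

theorem strictConvexOn_neg_one_pow_mul_iteratedDeriv_log (n : ℕ) :
    StrictConvexOn ℝ (Set.Ioi 0) fun y => (-1) ^ (n + 1) * iteratedDeriv n log y := by
  apply strictConvexOn_of_deriv2_pos' (convex_Ioi 0)
  · rcases n with _ | k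
    · simp only [iteratedDeriv_zero]
      exact continuousOn_const.mul (continuousOn_log.mono fun y hy => ne_of_gt hy)
    · simp only [Real.iteratedDeriv_succ_log]
      exact continuousOn_const.mul (continuousOn_const.mul
        ((continuousOn_zpow₀ _).mono fun y hy => ne_of_gt hy))
  · intro y hy
    simp only [Function.iterate_succ, Function.iterate_zero, Function.comp_apply, id,
      deriv_const_mul_field', ← iteratedDeriv_succ]
    rw [Real.iteratedDeriv_succ_log]
    have : (-1 : ℝ) ^ (n + 1) * (-1) ^ (n + 1) = 1 := by rw [← mul_pow]; norm_num
    rw [← mul_assoc, ← mul_assoc, this, one_mul]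
    exact mul_pos (by positivity) (zpow_pos hy _)

theorem Bs_eventuallyEq {t s x : ℝ} (hs : x + s ≠ 0) (ht : x + t ≠ 0) :
    Bs t s =ᶠ[𝓝 x] fun y => log (y + s) - log (y + t) + (t - s) * (y + s)⁻¹ := by
  filter_upwards [(continuous_add_const s).continuousAt.eventually_ne hs,
    (continuous_add_const t).continuousAt.eventually_ne ht] with y hys hyt
  rw [Bs, log_div hyt hys]
  field_simp
  ring

theorem iteratedDeriv_Bs (n : ℕ) {t s x : ℝ} (hs : x + s ≠ 0) (ht : x + t ≠ 0) :
    iteratedDeriv n (Bs t s) x = iteratedDeriv n log (x + s) - iteratedDeriv n log (x + t)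
      + (t - s) * iteratedDeriv (n + 1) log (x + s) := by
  have hlog : ∀ {a : ℝ}, x + a ≠ 0 → ContDiffAt ℝ n (fun y => log (y + a)) x := fun h =>
    (contDiffAt_log.2 h).comp x (contDiffAt_id.add contDiffAt_const)
  have hinv : ContDiffAt ℝ n (fun y => (t - s) * (y + s)⁻¹) x := by fun_prop (disch := exact hs)
  rw [(Bs_eventuallyEq hs ht).iteratedDeriv_eq,
    iteratedDeriv_fun_add ((hlog hs).sub (hlog ht)) hinv,
    iteratedDeriv_fun_sub (hlog hs) (hlog ht), iteratedDeriv_const_mul_field, ← deriv_log',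
    iteratedDeriv_succ', iteratedDeriv_comp_add_const, iteratedDeriv_comp_add_const,
    iteratedDeriv_comp_add_const]

theorem neg_one_pow_mul_iteratedDeriv_Bs_pos (n : ℕ) {t s x : ℝ} (hs : 0 < x + s)
    (ht : 0 < x + t) (hst : s ≠ t) : 0 < (-1) ^ n * iteratedDeriv n (Bs t s) x := by
  set h : ℝ → ℝ := fun y => (-1) ^ (n + 1) * iteratedDeriv n log y
  have hderiv : deriv h (x + s) = (-1) ^ (n + 1) * iteratedDeriv (n + 1) log (x + s) := by
    simp only [h, deriv_const_mul_field', iteratedDeriv_succ]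
  have hdiff : DifferentiableAt ℝ h (x + s) := by
    refine differentiableAt_of_deriv_ne_zero ?_
    rw [hderiv, Real.iteratedDeriv_succ_log]
    exact mul_ne_zero (by simp)
      (mul_ne_zero (by simp [Nat.factorial_ne_zero]) (zpow_ne_zero _ hs.ne'))
  have := (strictConvexOn_neg_one_pow_mul_iteratedDeriv_log n).add_deriv_mul_sub_lt hs ht
    (fun huv => hst (by linarith)) hdiff
  rw [hderiv] at this
  rw [iteratedDeriv_Bs n hs.ne' ht.ne']
  simp only [pow_succ] at this
  linarith

theorem differentiableAt_log_Gamma {x : ℝ} (hx : 0 < x) :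
    DifferentiableAt ℝ (fun y => log (Gamma y)) x :=
  (differentiableAt_Gamma fun m => by linarith [m.cast_nonneg (α := ℝ)]).log
    (Gamma_pos_of_pos hx).ne'

theorem log_Gamma_add_one {x : ℝ} (hx : 0 < x) :
    log (Gamma (x + 1)) = log (Gamma x) + log x := by
  rw [Gamma_add_one hx.ne', log_mul hx.ne' (Gamma_pos_of_pos hx).ne', add_comm]

theorem slope_log_Gamma_add_one {x : ℝ} (hx : 0 < x) :
    slope (log ∘ Gamma) x (x + 1) = log x := by
  simp [slope_def_field, log_Gamma_add_one hx]

theorem digamma_add_one {x : ℝ} (hx : 0 < x) : digamma (x + 1) = digamma x + x⁻¹ := by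
  rw [digamma, digamma, ← deriv_comp_add_const, ← deriv_log,
    ← deriv_add (differentiableAt_log_Gamma hx) (differentiableAt_log hx.ne')]
  exact Filter.EventuallyEq.deriv_eq <| by
    filter_upwards [eventually_gt_nhds hx] with y hy using log_Gamma_add_one hy

theorem digamma_le_log {x : ℝ} (hx : 0 < x) : digamma x ≤ log x := by
  have := convexOn_log_Gamma.deriv_le_slope hx (add_pos hx one_pos) (lt_add_one x)
    (differentiableAt_log_Gamma hx)
  rwa [slope_log_Gamma_add_one hx] at this

theorem log_le_digamma_add_one {x : ℝ} (hx : 0 < x) : log x ≤ digamma (x + 1) := by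
  have := convexOn_log_Gamma.slope_le_deriv hx (add_pos hx one_pos) (lt_add_one x)
    (differentiableAt_log_Gamma (add_pos hx one_pos))
  rwa [slope_log_Gamma_add_one hx] at this

theorem neg_inv_le_phiFn {x : ℝ} (hx : 0 < x) : -x⁻¹ ≤ phiFn x := by
  have := log_le_digamma_add_one hx
  rw [digamma_add_one hx] at this
  rw [phiFn]
  linarith

theorem phiFn_nonpos {x : ℝ} (hx : 0 < x) : phiFn x ≤ 0 :=
  sub_nonpos.2 (digamma_le_log hx)

theorem phiFn_le_log_add_one_sub {x : ℝ} (hx : 0 < x) :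
    phiFn x ≤ log (x + 1) + (-x⁻¹ - log x) := by
  have := digamma_le_log (show 0 < x + 1 by linarith)
  rw [digamma_add_one hx] at this
  rw [phiFn]
  linarith

theorem tendsto_phiFn_atTop : Tendsto phiFn atTop (𝓝 0) := by
  refine tendsto_of_tendsto_of_tendsto_of_le_of_le'
    (by simpa using (tendsto_inv_atTop_zero (𝕜 := ℝ)).neg) tendsto_const_nhds ?_ ?_
  · filter_upwards [eventually_gt_atTop 0] with x hx using neg_inv_le_phiFn hx
  · filter_upwards [eventually_gt_atTop 0] with x hx using phiFn_nonpos hx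

theorem tendsto_neg_inv_sub_log_nhdsGT_zero :
    Tendsto (fun x : ℝ => -x⁻¹ - log x) (𝓝[>] 0) atBot := by
  have hmul : Tendsto (fun x : ℝ => -1 - x * log x) (𝓝[>] 0) (𝓝 (-1)) := by
    simpa using (tendsto_const_nhds (x := (-1 : ℝ))).sub
      ((continuous_mul_log.tendsto 0).mono_left nhdsWithin_le_nhds)
  refine (tendsto_inv_nhdsGT_zero.atTop_mul_neg (by norm_num) hmul).congr' ?_
  filter_upwards [self_mem_nhdsWithin] with x (hx : 0 < x)
  field_simp

theorem tendsto_phiFn_nhdsGT_zero : Tendsto phiFn (𝓝[>] 0) atBot := by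
  have hlog : Tendsto (fun x : ℝ => log (x + 1)) (𝓝[>] 0) (𝓝 0) := by
    have := ((continuous_add_const (1 : ℝ)).continuousAt (x := 0)).log (by norm_num)
    simpa using this.tendsto.mono_left nhdsWithin_le_nhds
  refine tendsto_atBot_mono' _ ?_ (hlog.add_atBot tendsto_neg_inv_sub_log_nhdsGT_zero)
  filter_upwards [self_mem_nhdsWithin] with x (hx : 0 < x) using phiFn_le_log_add_one_sub hx

theorem tendsto_add_div_add_atTop (a b : ℝ) :
    Tendsto (fun x : ℝ => (x + a) / (x + b)) atTop (𝓝 1) := by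
  have h := (tendsto_inv_atTop_zero.comp (tendsto_atTop_add_const_right _ b tendsto_id)).const_mul
    (a - b) |>.const_add 1
  rw [mul_zero, add_zero] at h
  refine h.congr' ?_
  filter_upwards [eventually_gt_atTop (-b)] with x hx
  have : x + b ≠ 0 := by linarith
  simp only [Function.comp_apply, id]
  field_simp
  ring

theorem continuousAt_Bs {t s x : ℝ} (hs : x + s ≠ 0) (ht : x + t ≠ 0) :
    ContinuousAt (Bs t s) x := by
  unfold Bs
  fun_prop (disch := first | exact hs | exact div_ne_zero ht hs)

theorem tendsto_Bs_atTop (t s : ℝ) : Tendsto (Bs t s) atTop (𝓝 0) := by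
  have hg : ContinuousAt (fun r => r - log r - 1) 1 :=
    (continuousAt_id.sub (continuousAt_log one_ne_zero)).sub continuousAt_const
  unfold Bs
  simpa [Function.comp_def] using hg.tendsto.comp (tendsto_add_div_add_atTop t s)

theorem Fs_eq_sub_add_Bs {t s : ℝ} :
    Fs t s = fun x => phiFn x - phiFn (x + t) + Bs t s x := by
  ext x
  simp only [Fs, Bs]
  ring

theorem tendsto_Fs_atTop (t s : ℝ) : Tendsto (Fs t s) atTop (𝓝 0) := by
  have hshift := tendsto_phiFn_atTop.comp (tendsto_atTop_add_const_right _ t tendsto_id)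
  simpa [Fs_eq_sub_add_Bs] using
    (tendsto_phiFn_atTop.sub hshift).add (tendsto_Bs_atTop t s)

theorem tendsto_Fs_nhdsGT_zero {t s : ℝ} (ht : 0 < t) (hs : s ≠ 0) :
    Tendsto (Fs t s) (𝓝[>] 0) atBot := by
  have hB : Tendsto (Bs t s) (𝓝[>] 0) (𝓝 (Bs t s 0)) :=
    (continuousAt_Bs (by simpa) (by simpa using ht.ne')).tendsto.mono_left nhdsWithin_le_nhds
  refine tendsto_atBot_mono' _ ?_ (tendsto_phiFn_nhdsGT_zero.atBot_add (hB.const_add t⁻¹))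
  filter_upwards [self_mem_nhdsWithin] with x (hx : 0 < x)
  have hphi := neg_inv_le_phiFn (add_pos hx ht)
  have hinv : (x + t)⁻¹ ≤ t⁻¹ := inv_anti₀ ht (by linarith)
  rw [Fs_eq_sub_add_Bs]
  linarith

/-- with `t = d/2`, `d ≥ 1` an integer, and `s > 0`, `s ≠ t`, the function
`B_s` is completely monotone on `(0,∞)`: `(−1)^m B_s^{(m)}(x) > 0` for all `m ∈ ℕ₀`, `x > 0`;
in particular `B_s > 0`, `B_s' < 0`, `B_s'' > 0` on `(0,∞)`. Moreover
`B_s(0) = t/s − log(t/s) − 1 > 0` and `B_s(x) → 0` as `x → ∞`; consequently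
`F_s(x) → −∞` as `x → 0⁺` and `F_s(x) → 0` as `x → ∞`. -/
theorem Bs_completely_monotone (d : ℕ) (hd : 1 ≤ d) (t : ℝ) (ht : t = d / 2)
    (s : ℝ) (hs : 0 < s) (hst : s ≠ t) :
    (∀ m : ℕ, ∀ x > (0 : ℝ), 0 < (-1 : ℝ) ^ m * iteratedDeriv m (Bs t s) x) ∧
    (∀ x > (0 : ℝ), 0 < Bs t s x ∧ deriv (Bs t s) x < 0 ∧ 0 < deriv (deriv (Bs t s)) x) ∧
    (Bs t s 0 = t / s - Real.log (t / s) - 1 ∧ 0 < Bs t s 0) ∧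
    Tendsto (Bs t s) atTop (nhds 0) ∧
    Tendsto (Fs t s) (nhdsWithin 0 (Set.Ioi 0)) atBot ∧
    Tendsto (Fs t s) atTop (nhds 0) := by
  have ht0 : 0 < t := by
    have : (1 : ℝ) ≤ d := by exact_mod_cast hd
    rw [ht]
    linarith
  have hcm : ∀ m : ℕ, ∀ x ≥ (0 : ℝ), 0 < (-1 : ℝ) ^ m * iteratedDeriv m (Bs t s) x :=
    fun m x hx => neg_one_pow_mul_iteratedDeriv_Bs_pos m (by linarith) (by linarith) hst
  refine ⟨fun m x hx => hcm m x hx.le, fun x hx => ⟨?_, ?_, ?_⟩,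
    ⟨by simp [Bs], by simpa using hcm 0 0 le_rfl⟩,
    tendsto_Bs_atTop t s, tendsto_Fs_nhdsGT_zero ht0 hs.ne', tendsto_Fs_atTop t s⟩
  · simpa using hcm 0 x hx.le
  · simpa [iteratedDeriv_one] using hcm 1 x hx.le
  · simpa [iteratedDeriv_succ, iteratedDeriv_one] using hcm 2 x hx.le
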